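/- Let f_h : ℂ^k → ℂ^k be homogeneous of degree d ≥ 2 with f_h⁻¹(0) = {0}. Then the limit G_h(z) := lim_{n→∞} d^{-n} log|f_h^n(z)| exists for every z ≠ 0, the convergence is uniform on compact subsets of ℂ^k \ {0}, and G_h is continuous on ℂ^k \ {0}. -/

import Mathlib

open Filter

/-- Evaluation of a `k`-tuple of polynomials in `k` variables as a self-map of `ℂ^k`. -/
noncomputable def evalMap {k : ℕ} (F : Fin k → MvPolynomial (Fin k) ℂ)
    (z : EuclideanSpace ℂ (Fin k)) : EuclideanSpace ℂ (Fin k) :=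
  (WithLp.equiv 2 (Fin k → ℂ)).symm fun i =>
    MvPolynomial.eval ((WithLp.equiv 2 (Fin k → ℂ)) z) (F i)

/-!
Homogeneity and compactness of the unit sphere give `|log ‖f z‖ - d log ‖z‖| ≤ L` for `z ≠ 0`.
Hence consecutive terms `d⁻ⁿ log ‖fⁿ z‖` differ by at most `L d⁻ⁿ⁻¹`, uniformly in `z`, so the
telescoping series converges uniformly by the Weierstrass M-test, and its limit is continuous
as a uniform limit of continuous functions.
-/

open Set

theorem exists_tendstoUniformlyOn_of_norm_sub_le_geometric {α F : Type*}
    [NormedAddCommGroup F] [CompleteSpace F] {g : ℕ → α → F} {s : Set α} {D r : ℝ}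
    (hr₀ : 0 ≤ r) (hr₁ : r < 1) (h : ∀ n, ∀ x ∈ s, ‖g (n + 1) x - g n x‖ ≤ D * r ^ n) :
    ∃ G, TendstoUniformlyOn g G atTop s := by
  have hincr := tendstoUniformlyOn_tsum_nat
    ((summable_geometric_of_lt_one hr₀ hr₁).mul_left D) h
  have hconst : TendstoUniformlyOn (fun _ : ℕ => g 0) (g 0) atTop s :=
    fun _ hu => Eventually.of_forall fun _ _ _ => refl_mem_uniformity hu
  refine ⟨_, (hconst.add hincr).congr (Eventually.of_forall fun n x _ => ?_)⟩
  simp only [Pi.add_apply, Finset.sum_range_sub (fun i => g i x), add_sub_cancel]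

theorem exists_tendstoUniformlyOn_inv_pow_mul_iterate {α : Type*} {f : α → α} {φ : α → ℝ}
    {s : Set α} (hs : MapsTo f s s) {d L : ℝ} (hd : 1 < d)
    (hφ : ∀ x ∈ s, |φ (f x) - d * φ x| ≤ L) :
    ∃ G, TendstoUniformlyOn (fun n x => (d ^ n)⁻¹ * φ (f^[n] x)) G atTop s := by
  have hd₀ : 0 < d := zero_lt_one.trans hd
  refine exists_tendstoUniformlyOn_of_norm_sub_le_geometric (D := L / d) (by positivity)
    (inv_lt_one_of_one_lt₀ hd) fun n x hx => ?_
  have hstep : (d ^ (n + 1))⁻¹ * φ (f^[n + 1] x) - (d ^ n)⁻¹ * φ (f^[n] x)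
      = (d ^ (n + 1))⁻¹ * (φ (f (f^[n] x)) - d * φ (f^[n] x)) := by
    rw [Function.iterate_succ_apply']
    field_simp
    ring
  calc ‖(d ^ (n + 1))⁻¹ * φ (f^[n + 1] x) - (d ^ n)⁻¹ * φ (f^[n] x)‖
      = (d ^ (n + 1))⁻¹ * |φ (f (f^[n] x)) - d * φ (f^[n] x)| := by
        rw [hstep, Real.norm_eq_abs, abs_mul, abs_of_pos (by positivity)]
    _ ≤ (d ^ (n + 1))⁻¹ * L := by gcongr; exact hφ _ (hs.iterate n hx)
    _ = L / d * d⁻¹ ^ n := by rw [inv_pow, pow_succ]; field_simp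

theorem exists_abs_log_norm_sub_le_of_homogeneous {𝕜 E F : Type*} [RCLike 𝕜]
    [NormedAddCommGroup E] [NormedSpace 𝕜 E] [ProperSpace E]
    [NormedAddCommGroup F] [NormedSpace 𝕜 F] {f : E → F} {d : ℕ} (hf : Continuous f)
    (hsmul : ∀ (c : 𝕜) z, f (c • z) = c ^ d • f z) (hzero : ∀ z, f z = 0 → z = 0) :
    ∃ L, ∀ z ≠ 0, |Real.log ‖f z‖ - d * Real.log ‖z‖| ≤ L := by
  have hcont : ContinuousOn (fun z => Real.log ‖f z‖) (Metric.sphere 0 1) :=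
    hf.norm.continuousOn.log fun z hz h =>
      ne_zero_of_mem_unit_sphere ⟨z, hz⟩ (hzero z (norm_eq_zero.mp h))
  obtain ⟨L, hL⟩ := (isCompact_sphere (0 : E) 1).exists_bound_of_continuousOn hcont
  refine ⟨L, fun z hz => ?_⟩
  set w : E := (‖z‖⁻¹ : 𝕜) • z
  have hw : ‖w‖ = 1 := norm_smul_inv_norm hz
  have hzw : z = (‖z‖ : 𝕜) • w := by
    rw [smul_smul, mul_inv_cancel₀ (by simpa using hz), one_smul]
  have hfz : ‖f z‖ = ‖z‖ ^ d * ‖f w‖ := by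
    conv_lhs => rw [hzw, hsmul, norm_smul, norm_pow, RCLike.norm_ofReal, abs_norm]
  have hfw : f w ≠ 0 := fun h => by simp [hzero w h] at hw
  have hlog : Real.log ‖f z‖ - d * Real.log ‖z‖ = Real.log ‖f w‖ := by
    rw [hfz, Real.log_mul (by positivity) (norm_ne_zero_iff.mpr hfw), Real.log_pow]
    ring
  rw [hlog, ← Real.norm_eq_abs]
  exact hL w (mem_sphere_zero_iff_norm.mpr hw)

theorem MvPolynomial.IsHomogeneous.eval_smul {σ R : Type*} [CommSemiring R]
    {p : MvPolynomial σ R} {n : ℕ} (hp : p.IsHomogeneous n) (c : R) (x : σ → R) :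
    eval (c • x) p = c ^ n * eval x p := by
  rw [eval_eq, eval_eq, Finset.mul_sum]
  refine Finset.sum_congr rfl fun m hm => ?_
  have hdeg : ∑ i ∈ m.support, m i = n := by
    simpa [Finsupp.weight_apply, Finsupp.sum] using hp (mem_support_iff.mp hm)
  simp_rw [Pi.smul_apply, smul_eq_mul, mul_pow, Finset.prod_mul_distrib,
    Finset.prod_pow_eq_pow_sum, hdeg]
  ring

theorem evalMap_smul {k d : ℕ} {F : Fin k → MvPolynomial (Fin k) ℂ}
    (hF : ∀ i, (F i).IsHomogeneous d) (c : ℂ) (z : EuclideanSpace ℂ (Fin k)) :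
    evalMap F (c • z) = c ^ d • evalMap F z := by
  ext i
  simp [evalMap, (hF i).eval_smul]

theorem continuous_evalMap {k : ℕ} (F : Fin k → MvPolynomial (Fin k) ℂ) :
    Continuous (evalMap F) :=
  (PiLp.continuous_toLp 2 _).comp <| continuous_pi fun i =>
    (MvPolynomial.continuous_eval (F i)).comp (PiLp.continuous_ofLp 2 _)

theorem homogeneous_green_function_exists_general {k d : ℕ} (hd : 2 ≤ d)
    (F : Fin k → MvPolynomial (Fin k) ℂ)
    (hhom : ∀ i, (F i).IsHomogeneous d)
    (hzero : ∀ z : EuclideanSpace ℂ (Fin k), evalMap F z = 0 → z = 0) :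
    ∃ Gh : EuclideanSpace ℂ (Fin k) → ℝ,
      ContinuousOn Gh {z | z ≠ 0} ∧
      (∀ K : Set (EuclideanSpace ℂ (Fin k)), IsCompact K → K ⊆ {z | z ≠ 0} →
        TendstoUniformlyOn
          (fun n z => ((d : ℝ) ^ n)⁻¹ * Real.log ‖(evalMap F)^[n] z‖) Gh atTop K) ∧
      (∀ z : EuclideanSpace ℂ (Fin k), z ≠ 0 →
        Tendsto (fun n => ((d : ℝ) ^ n)⁻¹ * Real.log ‖(evalMap F)^[n] z‖) atTop
          (nhds (Gh z))) := by
  have hmaps : MapsTo (evalMap F) {z | z ≠ 0} {z | z ≠ 0} := fun z hz h => hz (hzero z h)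
  obtain ⟨L, hL⟩ := exists_abs_log_norm_sub_le_of_homogeneous (continuous_evalMap F)
    (evalMap_smul hhom) hzero
  obtain ⟨Gh, hGh⟩ := exists_tendstoUniformlyOn_inv_pow_mul_iterate
    (φ := fun z => Real.log ‖z‖) (d := d) hmaps (by exact_mod_cast hd) hL
  have hcont (n : ℕ) : ContinuousOn
      (fun z => ((d : ℝ) ^ n)⁻¹ * Real.log ‖(evalMap F)^[n] z‖) {z | z ≠ 0} :=
    continuousOn_const.mul <| ((continuous_evalMap F).iterate n).norm.continuousOn.log
      fun z hz => norm_ne_zero_iff.mpr (hmaps.iterate n hz)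
  exact ⟨Gh, hGh.continuousOn (Frequently.of_forall hcont), fun K _ hK => hGh.mono hK,
    fun z hz => hGh.tendsto_at hz⟩

/-- For `f_h` homogeneous of degree `d ≥ 2` with `f_h⁻¹(0) = {0}`, the limit
`G_h(z) = lim d^{-n} log |f_h^n(z)|` exists for every `z ≠ 0`, the convergence is uniform
on compact subsets of `ℂ^k \ {0}`, and `G_h` is continuous on `ℂ^k \ {0}`. -/
theorem homogeneous_green_function_exists {k d : ℕ} (hk : 1 ≤ k) (hd : 2 ≤ d)
    (F : Fin k → MvPolynomial (Fin k) ℂ)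
    (hhom : ∀ i, (F i).IsHomogeneous d)
    (hzero : ∀ z : EuclideanSpace ℂ (Fin k), evalMap F z = 0 → z = 0) :
    ∃ Gh : EuclideanSpace ℂ (Fin k) → ℝ,
      ContinuousOn Gh {z | z ≠ 0} ∧
      (∀ K : Set (EuclideanSpace ℂ (Fin k)), IsCompact K → K ⊆ {z | z ≠ 0} →
        TendstoUniformlyOn
          (fun n z => ((d : ℝ) ^ n)⁻¹ * Real.log ‖(evalMap F)^[n] z‖) Gh atTop K) ∧
      (∀ z : EuclideanSpace ℂ (Fin k), z ≠ 0 →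
        Tendsto (fun n => ((d : ℝ) ^ n)⁻¹ * Real.log ‖(evalMap F)^[n] z‖) atTop
          (nhds (Gh z))) :=
  homogeneous_green_function_exists_general hd F hhom hzero
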